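/- The Gauss linking integral is an isotopy invariant of two-component links: if H₁, H₂ : [0,1] × ℝ → ℝ³ are maps, smooth in both variables, such that for every t ∈ [0,1] the maps K₁ᵗ = H₁(t,·) and K₂ᵗ = H₂(t,·) are knots with disjoint images, then the quantity L(K₁ᵗ, K₂ᵗ) = (1/4π) ∫_{[0,1]×[0,1]} det(K₁ᵗ'(x), K₂ᵗ'(y), K₂ᵗ(y) − K₁ᵗ(x)) / ‖K₂ᵗ(y) − K₁ᵗ(x)‖³ dx dy is independent of t. -/

import Mathlib

open scoped Classical BigOperators Topology

/-- `ℝ³` with its Euclidean norm. -/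
abbrev E3 := EuclideanSpace ℝ (Fin 3)

/-- The determinant of the 3×3 matrix with columns `u`, `v`, `w`. -/
def det3 (u v w : E3) : ℝ :=
  u 0 * (v 1 * w 2 - v 2 * w 1) - u 1 * (v 0 * w 2 - v 2 * w 0) +
    u 2 * (v 0 * w 1 - v 1 * w 0)

/-- The cross product on `ℝ³`. -/
noncomputable def cross3 (u v : E3) : E3 :=
  EuclideanSpace.single 0 (u 1 * v 2 - u 2 * v 1) +
  EuclideanSpace.single 1 (u 2 * v 0 - u 0 * v 2) +
  EuclideanSpace.single 2 (u 0 * v 1 - u 1 * v 0)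

/-- A knot: a smooth `1`-periodic map `ℝ → ℝ³` with nowhere-vanishing derivative whose
restriction to `[0,1)` is injective. -/
structure IsKnot (K : ℝ → E3) : Prop where
  smooth : ContDiff ℝ (⊤ : ℕ∞) K
  periodic : Function.Periodic K 1
  injOn : Set.InjOn K (Set.Ico (0 : ℝ) 1)
  deriv_ne : ∀ t, deriv K t ≠ 0

/-- A smooth isotopy between two knots. -/
def KnotIsotopic (K₀ K₁ : ℝ → E3) : Prop :=
  ∃ H : ℝ → ℝ → E3,
    ContDiff ℝ (⊤ : ℕ∞) (fun p : ℝ × ℝ => H p.1 p.2) ∧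
    (∀ t ∈ Set.Icc (0 : ℝ) 1, IsKnot (H t)) ∧
    H 0 = K₀ ∧ H 1 = K₁

/-- A knot invariant: a real-valued function taking equal values on smoothly isotopic
knots. -/
def IsKnotInvariant (V : (ℝ → E3) → ℝ) : Prop :=
  ∀ K₀ K₁ : ℝ → E3, IsKnot K₀ → IsKnot K₁ → KnotIsotopic K₀ K₁ → V K₀ = V K₁

/-- The normalized area `2`-form of `S²` (extended to ambient `ℝ³`):
`ω_u(a, b) = det(u, a, b) / 4π`. -/
noncomputable def sphereForm (u a b : E3) : ℝ := det3 u a b / (4 * Real.pi)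

noncomputable section
namespace GaussLink
def dot3 (u v : E3) : ℝ := u 0 * v 0 + u 1 * v 1 + u 2 * v 2

lemma norm_eq_sqrt_dot3 (v : E3) : ‖v‖ = Real.sqrt (dot3 v v) := by
  rw [EuclideanSpace.norm_eq]
  congr 1
  simp [Fin.sum_univ_three, dot3, Real.norm_eq_abs, sq_abs, sq]

lemma det3_cyc (u v w : E3) : det3 u v w = det3 w u v := by
  unfold det3; ring

lemma hasDerivAt_apply3 {u : ℝ → E3} {u' : E3} {s : ℝ} (hu : HasDerivAt u u' s) (i : Fin 3) :
    HasDerivAt (fun s => u s i) (u' i) s := by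
  have := (EuclideanSpace.proj (𝕜 := ℝ) i).hasFDerivAt.comp_hasDerivAt s hu
  exact this

lemma hasDerivAt_det3 {u v w : ℝ → E3} {u' v' w' : E3} {s : ℝ}
    (hu : HasDerivAt u u' s) (hv : HasDerivAt v v' s) (hw : HasDerivAt w w' s) :
    HasDerivAt (fun s => det3 (u s) (v s) (w s))
      (det3 u' (v s) (w s) + det3 (u s) v' (w s) + det3 (u s) (v s) w') s := by
  have hu0 := hasDerivAt_apply3 hu 0; have hu1 := hasDerivAt_apply3 hu 1
  have hu2 := hasDerivAt_apply3 hu 2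
  have hv0 := hasDerivAt_apply3 hv 0; have hv1 := hasDerivAt_apply3 hv 1
  have hv2 := hasDerivAt_apply3 hv 2
  have hw0 := hasDerivAt_apply3 hw 0; have hw1 := hasDerivAt_apply3 hw 1
  have hw2 := hasDerivAt_apply3 hw 2
  unfold det3
  have := ((hu0.mul ((hv1.mul hw2).sub (hv2.mul hw1))).sub
      (hu1.mul ((hv0.mul hw2).sub (hv2.mul hw0)))).add
      (hu2.mul ((hv0.mul hw1).sub (hv1.mul hw0)))
  exact this.congr_deriv (by simp only [Pi.mul_apply, Pi.sub_apply]; ring)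

lemma hasDerivAt_norm3 {u : ℝ → E3} {u' : E3} {s : ℝ} (hu : HasDerivAt u u' s)
    (h0 : u s ≠ 0) : HasDerivAt (fun s => ‖u s‖) (dot3 (u s) u' / ‖u s‖) s := by
  have hS : HasDerivAt (fun s => dot3 (u s) (u s)) (2 * dot3 (u s) u') s := by
    have hu0 := hasDerivAt_apply3 hu 0; have hu1 := hasDerivAt_apply3 hu 1
    have hu2 := hasDerivAt_apply3 hu 2
    unfold dot3
    exact (((hu0.mul hu0).add (hu1.mul hu1)).add (hu2.mul hu2)).congr_deriv (by ring)
  have hpos : (0:ℝ) < ‖u s‖ := norm_pos_iff.2 h0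
  have hSne : dot3 (u s) (u s) ≠ 0 := by
    intro h
    rw [norm_eq_sqrt_dot3, h, Real.sqrt_zero] at hpos
    exact lt_irrefl _ hpos
  have := (Real.hasDerivAt_sqrt hSne).comp s hS
  have heq : (fun s => ‖u s‖) = (Real.sqrt ∘ fun s => dot3 (u s) (u s)) := by
    funext s; exact norm_eq_sqrt_dot3 (u s)
  rw [heq]
  refine this.congr_deriv ?_
  rw [← norm_eq_sqrt_dot3]
  field_simp

/-- Master 1-D derivative lemma for the Gauss-form integrands. -/
lemma hasDerivAt_gaussCore {u v w : ℝ → E3} {u' v' w' : E3} {s : ℝ}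
    (hu : HasDerivAt u u' s) (hv : HasDerivAt v v' s) (hw : HasDerivAt w w' s)
    (h0 : u s ≠ 0) :
    HasDerivAt (fun s => det3 (u s) (v s) (w s) / ‖u s‖ ^ 3)
      ((det3 u' (v s) (w s) + det3 (u s) v' (w s) + det3 (u s) (v s) w') / ‖u s‖ ^ 3
        - 3 * dot3 (u s) u' * det3 (u s) (v s) (w s) / ‖u s‖ ^ 5) s := by
  have hN := hasDerivAt_det3 hu hv hw
  have hρ := hasDerivAt_norm3 hu h0
  have hρ3 : HasDerivAt (fun s => ‖u s‖ ^ 3) (3 * ‖u s‖ ^ 2 * (dot3 (u s) u' / ‖u s‖)) s :=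
    (hρ.pow 3).congr_deriv (by norm_num)
  have hpos : (0:ℝ) < ‖u s‖ := norm_pos_iff.2 h0
  have hne3 : ‖u s‖ ^ 3 ≠ 0 := pow_ne_zero _ hpos.ne'
  have := hN.div hρ3 hne3
  refine this.congr_deriv ?_
  field_simp

/-- partial derivative w.r.t. the first variable. -/
def pfst (h : ℝ × ℝ → E3) (p : ℝ × ℝ) : E3 := fderiv ℝ h p (1, 0)
/-- partial derivative w.r.t. the second variable. -/
def psnd (h : ℝ × ℝ → E3) (p : ℝ × ℝ) : E3 := fderiv ℝ h p (0, 1)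

variable {h : ℝ × ℝ → E3}

lemma contDiff_pfst (hh : ContDiff ℝ (⊤ : ℕ∞) h) : ContDiff ℝ (⊤ : ℕ∞) (pfst h) :=
  (hh.fderiv_right (by simp)).clm_apply contDiff_const

lemma contDiff_psnd (hh : ContDiff ℝ (⊤ : ℕ∞) h) : ContDiff ℝ (⊤ : ℕ∞) (psnd h) :=
  (hh.fderiv_right (by simp)).clm_apply contDiff_const

lemma hasDerivAt_fst (hh : ContDiff ℝ (⊤ : ℕ∞) h) (t x : ℝ) :
    HasDerivAt (fun s => h (s, x)) (pfst h (t, x)) t := by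
  have hd : HasDerivAt (fun s : ℝ => ((s, x) : ℝ × ℝ)) (1, 0) t :=
    (hasDerivAt_id t).prodMk (hasDerivAt_const t x)
  exact (hh.differentiable (by simp) (t, x)).hasFDerivAt.comp_hasDerivAt t hd

lemma hasDerivAt_snd (hh : ContDiff ℝ (⊤ : ℕ∞) h) (t x : ℝ) :
    HasDerivAt (fun y => h (t, y)) (psnd h (t, x)) x := by
  have hd : HasDerivAt (fun y : ℝ => ((t, y) : ℝ × ℝ)) (0, 1) x :=
    (hasDerivAt_const x t).prodMk (hasDerivAt_id x)
  exact (hh.differentiable (by simp) (t, x)).hasFDerivAt.comp_hasDerivAt x hd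

/-- symmetry of second derivatives, in the directional form we need. -/
lemma mixed_symm (hh : ContDiff ℝ (⊤ : ℕ∞) h) (p : ℝ × ℝ) :
    fderiv ℝ (pfst h) p (0, 1) = fderiv ℝ (psnd h) p (1, 0) := by
  have hsymm : IsSymmSndFDerivAt ℝ h p :=
    (hh.contDiffAt).isSymmSndFDerivAt (by rw [minSmoothness_of_isRCLikeNormedField]; exact WithTop.coe_le_coe.2 (le_top : (2:ℕ∞) ≤ ⊤))
  have hdf : DifferentiableAt ℝ (fderiv ℝ h) p :=
    ((hh.fderiv_right (m := 1) (WithTop.coe_le_coe.2 (le_top : ((1+1:ℕ):ℕ∞) ≤ ⊤))).differentiable one_ne_zero) p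
  have e1 : ∀ (v w : ℝ × ℝ), fderiv ℝ (fun q => fderiv ℝ h q v) p w =
      fderiv ℝ (fderiv ℝ h) p w v := by
    intro v w
    rw [fderiv_clm_apply hdf (differentiableAt_const v)]
    simp
  show fderiv ℝ (fun q => fderiv ℝ h q (1, 0)) p (0, 1) =
      fderiv ℝ (fun q => fderiv ℝ h q (0, 1)) p (1, 0)
  rw [e1 (1, 0) (0, 1), e1 (0, 1) (1, 0)]
  exact hsymm (0, 1) (1, 0)

/-- the algebraic heart: the Gauss form is closed. -/
lemma div_identity (r a b c m₁ m₂ : E3) (ρ : ℝ) (hρ : ρ ≠ 0) (h2 : ρ ^ 2 = dot3 r r) :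
    ((det3 c a b + det3 r m₁ b + det3 r a m₂) / ρ ^ 3
        - 3 * dot3 r c * det3 r a b / ρ ^ 5)
      + ((det3 (-a) c b + det3 r (-m₁) b + det3 r c 0) / ρ ^ 3
        - 3 * dot3 r (-a) * det3 r c b / ρ ^ 5)
      + ((det3 b c a + det3 r m₂ a + det3 r c 0) / ρ ^ 3
        - 3 * dot3 r b * det3 r c a / ρ ^ 5) = 0 := by
  have hneg : ∀ (v : E3) (i : Fin 3), (-v) i = - v i := fun v i => rfl
  have h0 : ∀ i : Fin 3, (0 : E3) i = (0 : ℝ) := fun i => rfl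
  have key : (dot3 r r) * ((det3 c a b + det3 r m₁ b + det3 r a m₂)
      + (det3 (-a) c b + det3 r (-m₁) b + det3 r c 0)
      + (det3 b c a + det3 r m₂ a + det3 r c 0))
      - 3 * (dot3 r c * det3 r a b + dot3 r (-a) * det3 r c b + dot3 r b * det3 r c a) = 0 := by
    simp only [det3, dot3, hneg, h0]
    ring
  have expand : ((det3 c a b + det3 r m₁ b + det3 r a m₂) / ρ ^ 3
        - 3 * dot3 r c * det3 r a b / ρ ^ 5)
      + ((det3 (-a) c b + det3 r (-m₁) b + det3 r c 0) / ρ ^ 3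
        - 3 * dot3 r (-a) * det3 r c b / ρ ^ 5)
      + ((det3 b c a + det3 r m₂ a + det3 r c 0) / ρ ^ 3
        - 3 * dot3 r b * det3 r c a / ρ ^ 5)
      = ((dot3 r r) * ((det3 c a b + det3 r m₁ b + det3 r a m₂)
          + (det3 (-a) c b + det3 r (-m₁) b + det3 r c 0)
          + (det3 b c a + det3 r m₂ a + det3 r c 0))
        - 3 * (dot3 r c * det3 r a b + dot3 r (-a) * det3 r c b + dot3 r b * det3 r c a))
        / ρ ^ 5 := by
    rw [← h2]
    field_simp
    ring
  rw [expand, key, zero_div]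
lemma hasDerivAt_update (z : Fin 3 → ℝ) (j : Fin 3) (s : ℝ) :
    HasDerivAt (fun s : ℝ => Function.update z j s) (Pi.single j 1 : Fin 3 → ℝ) s := by
  have heq : (fun s : ℝ => Function.update z j s)
      = fun s : ℝ => z + (s - z j) • (Pi.single j 1 : Fin 3 → ℝ) := by
    funext s; funext i
    by_cases hij : i = j
    · subst hij; simp
    · simp [Function.update_of_ne hij, Pi.single_eq_of_ne hij]
  rw [heq]
  have : HasDerivAt (fun s : ℝ => (s - z j) • (Pi.single j 1 : Fin 3 → ℝ))
      ((1 : ℝ) • (Pi.single j 1 : Fin 3 → ℝ)) s := ((hasDerivAt_id s).sub_const (z j)).smul_const _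
  simpa using this.const_add z

lemma fderiv_along {Φ : (Fin 3 → ℝ) → ℝ} {z : Fin 3 → ℝ} (hΦ : DifferentiableAt ℝ Φ z)
    (j : Fin 3) {D : ℝ}
    (hD : HasDerivAt (fun s => Φ (Function.update z j s)) D (z j)) :
    fderiv ℝ Φ z (Pi.single j 1) = D := by
  have hline := hasDerivAt_update z j (z j)
  have hΦ' : HasFDerivAt Φ (fderiv ℝ Φ z) (Function.update z j (z j)) := by
    rw [Function.update_eq_self]; exact hΦ.hasFDerivAt
  have hcomp : HasDerivAt (fun s => Φ (Function.update z j s))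
      (fderiv ℝ Φ z (Pi.single j 1)) (z j) := hΦ'.comp_hasDerivAt (z j) hline
  exact hcomp.unique hD

section Fields
variable (h₁ h₂ : ℝ × ℝ → E3)

def q1 (z : Fin 3 → ℝ) : ℝ × ℝ := (z 0, z 1)
def q2 (z : Fin 3 → ℝ) : ℝ × ℝ := (z 0, z 2)
def rv (z : Fin 3 → ℝ) : E3 := h₂ (q2 z) - h₁ (q1 z)
def av (z : Fin 3 → ℝ) : E3 := psnd h₁ (q1 z)
def bv (z : Fin 3 → ℝ) : E3 := psnd h₂ (q2 z)
def cv (z : Fin 3 → ℝ) : E3 := pfst h₂ (q2 z) - pfst h₁ (q1 z)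

def Phi0 (z : Fin 3 → ℝ) : ℝ :=
  det3 (av h₁ z) (bv h₂ z) (rv h₁ h₂ z) / ‖rv h₁ h₂ z‖ ^ 3
def Phi1 (z : Fin 3 → ℝ) : ℝ :=
  det3 (rv h₁ h₂ z) (cv h₁ h₂ z) (bv h₂ z) / ‖rv h₁ h₂ z‖ ^ 3
def Phi2 (z : Fin 3 → ℝ) : ℝ :=
  det3 (rv h₁ h₂ z) (cv h₁ h₂ z) (av h₁ z) / ‖rv h₁ h₂ z‖ ^ 3

end Fields

section Diff
variable {h₁ h₂ : ℝ × ℝ → E3}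

lemma diff_q1 : Differentiable ℝ (q1) :=
  (ContinuousLinearMap.proj (R := ℝ) (φ := fun _ : Fin 3 => ℝ) 0).differentiable.prodMk
    (ContinuousLinearMap.proj (R := ℝ) (φ := fun _ : Fin 3 => ℝ) 1).differentiable

lemma diff_q2 : Differentiable ℝ (q2) :=
  (ContinuousLinearMap.proj (R := ℝ) (φ := fun _ : Fin 3 => ℝ) 0).differentiable.prodMk
    (ContinuousLinearMap.proj (R := ℝ) (φ := fun _ : Fin 3 => ℝ) 2).differentiable

lemma diff_rv (hh₁ : ContDiff ℝ (⊤ : ℕ∞) h₁) (hh₂ : ContDiff ℝ (⊤ : ℕ∞) h₂) :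
    Differentiable ℝ (rv h₁ h₂) := fun z =>
  (((hh₂.differentiable (by simp)) (q2 z)).comp z (diff_q2 z)).sub
    (((hh₁.differentiable (by simp)) (q1 z)).comp z (diff_q1 z))

lemma diff_av (hh₁ : ContDiff ℝ (⊤ : ℕ∞) h₁) : Differentiable ℝ (av h₁) := fun z =>
  (((contDiff_psnd hh₁).differentiable (by simp)) (q1 z)).comp z (diff_q1 z)

lemma diff_bv (hh₂ : ContDiff ℝ (⊤ : ℕ∞) h₂) : Differentiable ℝ (bv h₂) := fun z =>
  (((contDiff_psnd hh₂).differentiable (by simp)) (q2 z)).comp z (diff_q2 z)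

lemma diff_cv (hh₁ : ContDiff ℝ (⊤ : ℕ∞) h₁) (hh₂ : ContDiff ℝ (⊤ : ℕ∞) h₂) :
    Differentiable ℝ (cv h₁ h₂) := fun z =>
  ((((contDiff_pfst hh₂).differentiable (by simp)) (q2 z)).comp z (diff_q2 z)).sub
    ((((contDiff_pfst hh₁).differentiable (by simp)) (q1 z)).comp z (diff_q1 z))

lemma diffAt_comp3 {u : (Fin 3 → ℝ) → E3} {z : Fin 3 → ℝ} (hu : DifferentiableAt ℝ u z)
    (i : Fin 3) : DifferentiableAt ℝ (fun z => u z i) z := by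
  have := ((EuclideanSpace.proj (𝕜 := ℝ) (ι := Fin 3) i).differentiableAt).comp z hu
  exact this

lemma diffAt_core {u v w c : (Fin 3 → ℝ) → E3} {z : Fin 3 → ℝ}
    (hu : DifferentiableAt ℝ u z) (hv : DifferentiableAt ℝ v z)
    (hw : DifferentiableAt ℝ w z) (hc : DifferentiableAt ℝ c z) (h0 : c z ≠ 0) :
    DifferentiableAt ℝ (fun z => det3 (u z) (v z) (w z) / ‖c z‖ ^ 3) z := by
  have hu0 := diffAt_comp3 hu 0; have hu1 := diffAt_comp3 hu 1; have hu2 := diffAt_comp3 hu 2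
  have hv0 := diffAt_comp3 hv 0; have hv1 := diffAt_comp3 hv 1; have hv2 := diffAt_comp3 hv 2
  have hw0 := diffAt_comp3 hw 0; have hw1 := diffAt_comp3 hw 1; have hw2 := diffAt_comp3 hw 2
  have hnum : DifferentiableAt ℝ (fun z => det3 (u z) (v z) (w z)) z := by
    unfold det3
    exact ((hu0.mul ((hv1.mul hw2).sub (hv2.mul hw1))).sub
      (hu1.mul ((hv0.mul hw2).sub (hv2.mul hw0)))).add
      (hu2.mul ((hv0.mul hw1).sub (hv1.mul hw0)))
  have hden : DifferentiableAt ℝ (fun z => ‖c z‖ ^ 3) z := (hc.norm ℝ h0).pow 3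
  simp only [div_eq_mul_inv]
  exact hnum.mul (hden.inv (pow_ne_zero 3 (norm_ne_zero_iff.2 h0)))

variable (hh₁ : ContDiff ℝ (⊤ : ℕ∞) h₁) (hh₂ : ContDiff ℝ (⊤ : ℕ∞) h₂)
include hh₁ hh₂

lemma diffAt_Phi0 {z : Fin 3 → ℝ} (h0 : rv h₁ h₂ z ≠ 0) :
    DifferentiableAt ℝ (Phi0 h₁ h₂) z :=
  diffAt_core ((diff_av hh₁) z) ((diff_bv hh₂) z) ((diff_rv hh₁ hh₂) z)
    ((diff_rv hh₁ hh₂) z) h0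

lemma diffAt_Phi1 {z : Fin 3 → ℝ} (h0 : rv h₁ h₂ z ≠ 0) :
    DifferentiableAt ℝ (Phi1 h₁ h₂) z :=
  diffAt_core ((diff_rv hh₁ hh₂) z) ((diff_cv hh₁ hh₂) z) ((diff_bv hh₂) z)
    ((diff_rv hh₁ hh₂) z) h0

lemma diffAt_Phi2 {z : Fin 3 → ℝ} (h0 : rv h₁ h₂ z ≠ 0) :
    DifferentiableAt ℝ (Phi2 h₁ h₂) z :=
  diffAt_core ((diff_rv hh₁ hh₂) z) ((diff_cv hh₁ hh₂) z) ((diff_av hh₁) z)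
    ((diff_rv hh₁ hh₂) z) h0

end Diff
section Divergence
variable {h₁ h₂ : ℝ × ℝ → E3}

lemma div_Phi_zero (hh₁ : ContDiff ℝ (⊤ : ℕ∞) h₁) (hh₂ : ContDiff ℝ (⊤ : ℕ∞) h₂)
    {z : Fin 3 → ℝ} (h0 : rv h₁ h₂ z ≠ 0) :
    fderiv ℝ (Phi0 h₁ h₂) z (Pi.single 0 1) + fderiv ℝ (Phi1 h₁ h₂) z (Pi.single 1 1)
      + fderiv ℝ (Phi2 h₁ h₂) z (Pi.single 2 1) = 0 := by
  have e00 : ∀ s : ℝ, Function.update z 0 s 0 = s := fun s => Function.update_self 0 s z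
  have e01 : ∀ s : ℝ, Function.update z 0 s 1 = z 1 :=
    fun s => Function.update_of_ne (by decide) s z
  have e02 : ∀ s : ℝ, Function.update z 0 s 2 = z 2 :=
    fun s => Function.update_of_ne (by decide) s z
  have e10 : ∀ s : ℝ, Function.update z 1 s 0 = z 0 :=
    fun s => Function.update_of_ne (by decide) s z
  have e11 : ∀ s : ℝ, Function.update z 1 s 1 = s := fun s => Function.update_self 1 s z
  have e12 : ∀ s : ℝ, Function.update z 1 s 2 = z 2 :=
    fun s => Function.update_of_ne (by decide) s z
  have e20 : ∀ s : ℝ, Function.update z 2 s 0 = z 0 :=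
    fun s => Function.update_of_ne (by decide) s z
  have e21 : ∀ s : ℝ, Function.update z 2 s 1 = z 1 :=
    fun s => Function.update_of_ne (by decide) s z
  have e22 : ∀ s : ℝ, Function.update z 2 s 2 = s := fun s => Function.update_self 2 s z
  set M₁ : E3 := pfst (psnd h₁) (q1 z) with hM₁
  set M₂ : E3 := pfst (psnd h₂) (q2 z) with hM₂
  -- the t-derivative of Phi0
  have hR0 : HasDerivAt (fun s => h₂ (s, z 2) - h₁ (s, z 1)) (cv h₁ h₂ z) (z 0) :=
    (hasDerivAt_fst hh₂ (z 0) (z 2)).sub (hasDerivAt_fst hh₁ (z 0) (z 1))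
  have hA0 : HasDerivAt (fun s => psnd h₁ (s, z 1)) M₁ (z 0) :=
    hasDerivAt_fst (contDiff_psnd hh₁) (z 0) (z 1)
  have hB0 : HasDerivAt (fun s => psnd h₂ (s, z 2)) M₂ (z 0) :=
    hasDerivAt_fst (contDiff_psnd hh₂) (z 0) (z 2)
  have core0 := hasDerivAt_gaussCore hR0 hA0 hB0 (by exact h0)
  have hΦ0 : HasDerivAt (fun s => Phi0 h₁ h₂ (Function.update z 0 s))
      ((det3 (cv h₁ h₂ z) (av h₁ z) (bv h₂ z) + det3 (rv h₁ h₂ z) M₁ (bv h₂ z)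
          + det3 (rv h₁ h₂ z) (av h₁ z) M₂) / ‖rv h₁ h₂ z‖ ^ 3
        - 3 * dot3 (rv h₁ h₂ z) (cv h₁ h₂ z) * det3 (rv h₁ h₂ z) (av h₁ z) (bv h₂ z)
          / ‖rv h₁ h₂ z‖ ^ 5) (z 0) := by
    have hfun : (fun s => Phi0 h₁ h₂ (Function.update z 0 s))
        = fun s => det3 (h₂ (s, z 2) - h₁ (s, z 1)) (psnd h₁ (s, z 1)) (psnd h₂ (s, z 2))
            / ‖h₂ (s, z 2) - h₁ (s, z 1)‖ ^ 3 := by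
      funext s
      simp only [Phi0, rv, av, bv, q1, q2, e00, e01, e02]
      rw [det3_cyc]
    rw [hfun]
    exact core0
  -- the x-derivative of Phi1
  have hR1 : HasDerivAt (fun s => h₂ (z 0, z 2) - h₁ (z 0, s)) (-(av h₁ z)) (z 1) :=
    (hasDerivAt_snd hh₁ (z 0) (z 1)).const_sub (h₂ (z 0, z 2))
  have hC1 : HasDerivAt (fun s => pfst h₂ (z 0, z 2) - pfst h₁ (z 0, s)) (-M₁) (z 1) := by
    have hmix : psnd (pfst h₁) (q1 z) = M₁ := mixed_symm hh₁ (q1 z)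
    have := (hasDerivAt_snd (contDiff_pfst hh₁) (z 0) (z 1)).const_sub (pfst h₂ (z 0, z 2))
    rwa [show psnd (pfst h₁) (z 0, z 1) = M₁ from hmix] at this
  have hB1 : HasDerivAt (fun _ : ℝ => bv h₂ z) (0 : E3) (z 1) := hasDerivAt_const _ _
  have core1 := hasDerivAt_gaussCore hR1 hC1 hB1 (by exact h0)
  have hΦ1 : HasDerivAt (fun s => Phi1 h₁ h₂ (Function.update z 1 s))
      ((det3 (-(av h₁ z)) (cv h₁ h₂ z) (bv h₂ z) + det3 (rv h₁ h₂ z) (-M₁) (bv h₂ z)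
          + det3 (rv h₁ h₂ z) (cv h₁ h₂ z) 0) / ‖rv h₁ h₂ z‖ ^ 3
        - 3 * dot3 (rv h₁ h₂ z) (-(av h₁ z)) * det3 (rv h₁ h₂ z) (cv h₁ h₂ z) (bv h₂ z)
          / ‖rv h₁ h₂ z‖ ^ 5) (z 1) := by
    have hfun : (fun s => Phi1 h₁ h₂ (Function.update z 1 s))
        = fun s => det3 (h₂ (z 0, z 2) - h₁ (z 0, s))
            (pfst h₂ (z 0, z 2) - pfst h₁ (z 0, s)) (bv h₂ z)
            / ‖h₂ (z 0, z 2) - h₁ (z 0, s)‖ ^ 3 := by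
      funext s
      simp only [Phi1, rv, av, bv, cv, q1, q2, e10, e11, e12]
    rw [hfun]
    exact core1
  -- the y-derivative of Phi2
  have hR2 : HasDerivAt (fun s => h₂ (z 0, s) - h₁ (z 0, z 1)) (bv h₂ z) (z 2) :=
    (hasDerivAt_snd hh₂ (z 0) (z 2)).sub_const (h₁ (z 0, z 1))
  have hC2 : HasDerivAt (fun s => pfst h₂ (z 0, s) - pfst h₁ (z 0, z 1)) M₂ (z 2) := by
    have hmix : psnd (pfst h₂) (q2 z) = M₂ := mixed_symm hh₂ (q2 z)
    have := (hasDerivAt_snd (contDiff_pfst hh₂) (z 0) (z 2)).sub_const (pfst h₁ (z 0, z 1))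
    rwa [show psnd (pfst h₂) (z 0, z 2) = M₂ from hmix] at this
  have hA2 : HasDerivAt (fun _ : ℝ => av h₁ z) (0 : E3) (z 2) := hasDerivAt_const _ _
  have core2 := hasDerivAt_gaussCore hR2 hC2 hA2 (by exact h0)
  have hΦ2 : HasDerivAt (fun s => Phi2 h₁ h₂ (Function.update z 2 s))
      ((det3 (bv h₂ z) (cv h₁ h₂ z) (av h₁ z) + det3 (rv h₁ h₂ z) M₂ (av h₁ z)
          + det3 (rv h₁ h₂ z) (cv h₁ h₂ z) 0) / ‖rv h₁ h₂ z‖ ^ 3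
        - 3 * dot3 (rv h₁ h₂ z) (bv h₂ z) * det3 (rv h₁ h₂ z) (cv h₁ h₂ z) (av h₁ z)
          / ‖rv h₁ h₂ z‖ ^ 5) (z 2) := by
    have hfun : (fun s => Phi2 h₁ h₂ (Function.update z 2 s))
        = fun s => det3 (h₂ (z 0, s) - h₁ (z 0, z 1))
            (pfst h₂ (z 0, s) - pfst h₁ (z 0, z 1)) (av h₁ z)
            / ‖h₂ (z 0, s) - h₁ (z 0, z 1)‖ ^ 3 := by
      funext s
      simp only [Phi2, rv, av, bv, cv, q1, q2, e20, e21, e22]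
    rw [hfun]
    exact core2
  rw [fderiv_along (diffAt_Phi0 hh₁ hh₂ h0) 0 hΦ0,
    fderiv_along (diffAt_Phi1 hh₁ hh₂ h0) 1 hΦ1,
    fderiv_along (diffAt_Phi2 hh₁ hh₂ h0) 2 hΦ2]
  have hρpos : (0:ℝ) < ‖rv h₁ h₂ z‖ := norm_pos_iff.2 h0
  have hdotnn : (0:ℝ) ≤ dot3 (rv h₁ h₂ z) (rv h₁ h₂ z) := by
    have : dot3 (rv h₁ h₂ z) (rv h₁ h₂ z)
        = (rv h₁ h₂ z 0) ^ 2 + (rv h₁ h₂ z 1) ^ 2 + (rv h₁ h₂ z 2) ^ 2 := by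
      unfold dot3; ring
    rw [this]; positivity
  have h2 : ‖rv h₁ h₂ z‖ ^ 2 = dot3 (rv h₁ h₂ z) (rv h₁ h₂ z) := by
    rw [norm_eq_sqrt_dot3]
    exact Real.sq_sqrt hdotnn
  exact div_identity (rv h₁ h₂ z) (av h₁ z) (bv h₂ z) (cv h₁ h₂ z) M₁ M₂ _ hρpos.ne' h2

end Divergence
section Faces
open MeasureTheory
variable {h₁ h₂ : ℝ × ℝ → E3}

lemma pfst_per {h : ℝ × ℝ → E3} (hh : ContDiff ℝ (⊤ : ℕ∞) h) {t : ℝ} (ht : t ∈ Set.Ioo (0:ℝ) 1)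
    (hper : ∀ s ∈ Set.Icc (0:ℝ) 1, h (s, 1) = h (s, 0)) :
    pfst h (t, 1) = pfst h (t, 0) := by
  have hev : (fun s => h (s, 0)) =ᶠ[𝓝 t] (fun s => h (s, 1)) := by
    filter_upwards [Ioo_mem_nhds ht.1 ht.2] with s hs
    exact (hper s (Set.mem_Icc_of_Ioo hs)).symm
  exact ((hasDerivAt_fst hh t 1).congr_of_eventuallyEq hev).unique (hasDerivAt_fst hh t 0)

lemma face0_convert (h₁ h₂ : ℝ × ℝ → E3) (t₀ : ℝ) :
    (∫ x in Set.Icc (![0,0] : Fin 2 → ℝ) ![1,1], Phi0 h₁ h₂ (Fin.insertNth 0 t₀ x))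
      = ∫ p in (Set.Icc (0:ℝ) 1) ×ˢ (Set.Icc (0:ℝ) 1),
          det3 (psnd h₁ (t₀, p.1)) (psnd h₂ (t₀, p.2)) (h₂ (t₀, p.2) - h₁ (t₀, p.1))
            / ‖h₂ (t₀, p.2) - h₁ (t₀, p.1)‖ ^ 3 := by
  have hpre : ((MeasurableEquiv.finTwoArrow (α := ℝ)).symm) ⁻¹' (Set.Icc ![0,0] ![1,1]) =
      (Set.Icc (0:ℝ) 1) ×ˢ (Set.Icc (0:ℝ) 1) := by
    ext p
    simp [Set.mem_Icc, Pi.le_def, Fin.forall_fin_two, MeasurableEquiv.finTwoArrow, Prod.le_def]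
  have key := ((volume_preserving_finTwoArrow ℝ).symm).setIntegral_preimage_emb
    (MeasurableEquiv.measurableEmbedding _)
    (fun x => Phi0 h₁ h₂ (Fin.insertNth 0 t₀ x)) (Set.Icc ![0,0] ![1,1])
  rw [hpre] at key
  rw [← key]
  rfl

lemma face1_cancel (hh₁ : ContDiff ℝ (⊤ : ℕ∞) h₁)
    (hper₁ : ∀ s ∈ Set.Icc (0:ℝ) 1, h₁ (s, 1) = h₁ (s, 0))
    {τ : ℝ} (hτ : τ ∈ Set.Icc (0:ℝ) 1) :
    (∫ x in Set.Icc (![0,0] : Fin 2 → ℝ) ![τ,1], Phi1 h₁ h₂ (Fin.insertNth 1 1 x))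
      = ∫ x in Set.Icc (![0,0] : Fin 2 → ℝ) ![τ,1], Phi1 h₁ h₂ (Fin.insertNth 1 0 x) := by
  apply setIntegral_congr_ae measurableSet_Icc
  have hae : ∀ᵐ x : Fin 2 → ℝ, x 0 ≠ 0 ∧ x 0 ≠ 1 := by
    rw [volume_pi]
    exact (Measure.ae_eval_ne (fun _ : Fin 2 => (volume : Measure ℝ)) 0 (0:ℝ)).and
      (Measure.ae_eval_ne (fun _ : Fin 2 => (volume : Measure ℝ)) 0 (1:ℝ))
  filter_upwards [hae] with x hx hmem
  rw [Set.mem_Icc] at hmem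
  have h0 : (0:ℝ) ≤ x 0 := by simpa using hmem.1 0
  have h1 : x 0 ≤ τ := by simpa using hmem.2 0
  have ht : x 0 ∈ Set.Ioo (0:ℝ) 1 :=
    ⟨lt_of_le_of_ne h0 (Ne.symm hx.1), lt_of_le_of_ne (h1.trans hτ.2) hx.2⟩
  have e1 : h₁ (x 0, 1) = h₁ (x 0, 0) := hper₁ (x 0) (Set.mem_Icc_of_Ioo ht)
  have e2 : pfst h₁ (x 0, 1) = pfst h₁ (x 0, 0) := pfst_per hh₁ ht hper₁
  show det3 (h₂ (x 0, x 1) - h₁ (x 0, 1)) (pfst h₂ (x 0, x 1) - pfst h₁ (x 0, 1))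
        (psnd h₂ (x 0, x 1)) / ‖h₂ (x 0, x 1) - h₁ (x 0, 1)‖ ^ 3
      = det3 (h₂ (x 0, x 1) - h₁ (x 0, 0)) (pfst h₂ (x 0, x 1) - pfst h₁ (x 0, 0))
        (psnd h₂ (x 0, x 1)) / ‖h₂ (x 0, x 1) - h₁ (x 0, 0)‖ ^ 3
  rw [e1, e2]

lemma face2_cancel (hh₂ : ContDiff ℝ (⊤ : ℕ∞) h₂)
    (hper₂ : ∀ s ∈ Set.Icc (0:ℝ) 1, h₂ (s, 1) = h₂ (s, 0))
    {τ : ℝ} (hτ : τ ∈ Set.Icc (0:ℝ) 1) :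
    (∫ x in Set.Icc (![0,0] : Fin 2 → ℝ) ![τ,1], Phi2 h₁ h₂ (Fin.insertNth 2 1 x))
      = ∫ x in Set.Icc (![0,0] : Fin 2 → ℝ) ![τ,1], Phi2 h₁ h₂ (Fin.insertNth 2 0 x) := by
  apply setIntegral_congr_ae measurableSet_Icc
  have hae : ∀ᵐ x : Fin 2 → ℝ, x 0 ≠ 0 ∧ x 0 ≠ 1 := by
    rw [volume_pi]
    exact (Measure.ae_eval_ne (fun _ : Fin 2 => (volume : Measure ℝ)) 0 (0:ℝ)).and
      (Measure.ae_eval_ne (fun _ : Fin 2 => (volume : Measure ℝ)) 0 (1:ℝ))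
  filter_upwards [hae] with x hx hmem
  rw [Set.mem_Icc] at hmem
  have h0 : (0:ℝ) ≤ x 0 := by simpa using hmem.1 0
  have h1 : x 0 ≤ τ := by simpa using hmem.2 0
  have ht : x 0 ∈ Set.Ioo (0:ℝ) 1 :=
    ⟨lt_of_le_of_ne h0 (Ne.symm hx.1), lt_of_le_of_ne (h1.trans hτ.2) hx.2⟩
  have e1 : h₂ (x 0, 1) = h₂ (x 0, 0) := hper₂ (x 0) (Set.mem_Icc_of_Ioo ht)
  have e2 : pfst h₂ (x 0, 1) = pfst h₂ (x 0, 0) := pfst_per hh₂ ht hper₂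
  show det3 (h₂ (x 0, 1) - h₁ (x 0, x 1)) (pfst h₂ (x 0, 1) - pfst h₁ (x 0, x 1))
        (psnd h₁ (x 0, x 1)) / ‖h₂ (x 0, 1) - h₁ (x 0, x 1)‖ ^ 3
      = det3 (h₂ (x 0, 0) - h₁ (x 0, x 1)) (pfst h₂ (x 0, 0) - pfst h₁ (x 0, x 1))
        (psnd h₁ (x 0, x 1)) / ‖h₂ (x 0, 0) - h₁ (x 0, x 1)‖ ^ 3
  rw [e1, e2]

end Faces
section Main
open MeasureTheory
variable {h₁ h₂ : ℝ × ℝ → E3}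

lemma main_key (hh₁ : ContDiff ℝ (⊤ : ℕ∞) h₁) (hh₂ : ContDiff ℝ (⊤ : ℕ∞) h₂)
    (hper₁ : ∀ s ∈ Set.Icc (0:ℝ) 1, h₁ (s, 1) = h₁ (s, 0))
    (hper₂ : ∀ s ∈ Set.Icc (0:ℝ) 1, h₂ (s, 1) = h₂ (s, 0))
    (hdis : ∀ t ∈ Set.Icc (0:ℝ) 1, ∀ x y : ℝ, h₁ (t, x) ≠ h₂ (t, y))
    {τ : ℝ} (hτ : τ ∈ Set.Icc (0:ℝ) 1) :
    (∫ x in Set.Icc (![0,0] : Fin 2 → ℝ) ![1,1], Phi0 h₁ h₂ (Fin.insertNth 0 τ x))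
      = ∫ x in Set.Icc (![0,0] : Fin 2 → ℝ) ![1,1], Phi0 h₁ h₂ (Fin.insertNth 0 0 x) := by
  set a : Fin 3 → ℝ := fun _ => 0 with ha
  set b : Fin 3 → ℝ := ![τ, 1, 1] with hb
  set f : Fin 3 → (Fin 3 → ℝ) → ℝ := ![Phi0 h₁ h₂, Phi1 h₁ h₂, Phi2 h₁ h₂] with hf
  set f' : Fin 3 → (Fin 3 → ℝ) → (Fin 3 → ℝ) →L[ℝ] ℝ := fun i z => fderiv ℝ (f i) z with hf'
  have hf0 : f 0 = Phi0 h₁ h₂ := rfl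
  have hf1 : f 1 = Phi1 h₁ h₂ := rfl
  have hf2 : f 2 = Phi2 h₁ h₂ := rfl
  have hble : a ≤ b := by
    intro i; fin_cases i
    · exact hτ.1
    · exact zero_le_one
    · exact zero_le_one
  have hbox : ∀ z ∈ Set.Icc a b, rv h₁ h₂ z ≠ 0 := by
    intro z hz
    rw [Set.mem_Icc] at hz
    have h00 : (0:ℝ) ≤ z 0 := hz.1 0
    have h01 : z 0 ≤ τ := hz.2 0
    exact sub_ne_zero_of_ne (Ne.symm (hdis (z 0) ⟨h00, h01.trans hτ.2⟩ (z 1) (z 2)))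
  have hdiff : ∀ z ∈ Set.Icc a b, ∀ i : Fin 3, DifferentiableAt ℝ (f i) z := by
    intro z hz i
    have h0 := hbox z hz
    fin_cases i
    · exact diffAt_Phi0 hh₁ hh₂ h0
    · exact diffAt_Phi1 hh₁ hh₂ h0
    · exact diffAt_Phi2 hh₁ hh₂ h0
  have hEq : Set.EqOn (fun x => ∑ i : Fin 3, f' i x (Pi.single i 1)) 0 (Set.Icc a b) := by
    intro z hz
    have h := div_Phi_zero hh₁ hh₂ (hbox z hz)
    show (∑ i : Fin 3, f' i z (Pi.single i 1)) = 0
    rw [Fin.sum_univ_three]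
    exact h
  have hdivg := integral_divergence_of_hasFDerivAt_off_countable' a b hble f f' ∅
    Set.countable_empty
    (fun i z hz => ((hdiff z hz i).continuousAt).continuousWithinAt)
    (by
      intro x hx i
      have hmem : x ∈ Set.Icc a b := by
        rw [Set.mem_Icc]
        refine ⟨fun j => ?_, fun j => ?_⟩
        · exact (hx.1 j (Set.mem_univ j)).1.le
        · exact (hx.1 j (Set.mem_univ j)).2.le
      exact (hdiff x hmem i).hasFDerivAt)
    ((integrableOn_congr_fun hEq measurableSet_Icc).mpr integrableOn_zero)
  have hLHS : (∫ x in Set.Icc a b, ∑ i : Fin 3, f' i x (Pi.single i 1)) = 0 := by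
    rw [setIntegral_congr_fun measurableSet_Icc hEq]
    simp
  rw [hLHS, Fin.sum_univ_three] at hdivg
  have hs0a : a ∘ Fin.succAbove 0 = (![0,0] : Fin 2 → ℝ) := by
    funext j; fin_cases j <;> rfl
  have hs0b : b ∘ Fin.succAbove 0 = (![1,1] : Fin 2 → ℝ) := by
    funext j; fin_cases j <;> rfl
  have hs1a : a ∘ Fin.succAbove 1 = (![0,0] : Fin 2 → ℝ) := by
    funext j; fin_cases j <;> rfl
  have hs1b : b ∘ Fin.succAbove 1 = (![τ,1] : Fin 2 → ℝ) := by
    funext j; fin_cases j <;> rfl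
  have hs2a : a ∘ Fin.succAbove 2 = (![0,0] : Fin 2 → ℝ) := by
    funext j; fin_cases j <;> rfl
  have hs2b : b ∘ Fin.succAbove 2 = (![τ,1] : Fin 2 → ℝ) := by
    funext j; fin_cases j <;> rfl
  rw [hs0a, hs0b, hs1a, hs1b, hs2a, hs2b, hf0, hf1, hf2] at hdivg
  have hb0 : b 0 = τ := rfl
  have hb1 : b 1 = 1 := rfl
  have hb2 : b 2 = 1 := rfl
  have ha0 : a 0 = 0 := rfl
  have ha1 : a 1 = 0 := rfl
  have ha2 : a 2 = 0 := rfl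
  simp only [hb0, hb1, hb2, ha0, ha1, ha2] at hdivg
  rw [face1_cancel hh₁ hper₁ hτ, face2_cancel hh₂ hper₂ hτ] at hdivg
  linarith [hdivg]

end Main
end GaussLink
end

/-- The Gauss linking integral of a two-component link:
`L(K₁,K₂) = (1/4π) ∫_{[0,1]²} det(K₁'(x), K₂'(y), K₂(y) − K₁(x)) / ‖K₂(y) − K₁(x)‖³`. -/
noncomputable def linkingIntegral (K₁ K₂ : ℝ → E3) : ℝ :=
  (1 / (4 * Real.pi)) *
    ∫ p in (Set.Icc (0 : ℝ) 1) ×ˢ (Set.Icc (0 : ℝ) 1),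
      det3 (deriv K₁ p.1) (deriv K₂ p.2) (K₂ p.2 - K₁ p.1) / ‖K₂ p.2 - K₁ p.1‖ ^ 3

/-- **The Gauss linking integral is an isotopy invariant of two-component links**
(§3.1 of the paper): if `H₁, H₂` are jointly smooth families such that for every
`t ∈ [0,1]` the maps `K₁ᵗ = H₁ t` and `K₂ᵗ = H₂ t` are knots with disjoint images,
then `L(K₁ᵗ, K₂ᵗ)` is independent of `t`. -/
theorem gauss_linking_integral_isotopy_invariant
    (H₁ H₂ : ℝ → ℝ → E3)
    (hH₁ : ContDiff ℝ (⊤ : ℕ∞) (fun p : ℝ × ℝ => H₁ p.1 p.2))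
    (hH₂ : ContDiff ℝ (⊤ : ℕ∞) (fun p : ℝ × ℝ => H₂ p.1 p.2))
    (hK₁ : ∀ t ∈ Set.Icc (0 : ℝ) 1, IsKnot (H₁ t))
    (hK₂ : ∀ t ∈ Set.Icc (0 : ℝ) 1, IsKnot (H₂ t))
    (hdisj : ∀ t ∈ Set.Icc (0 : ℝ) 1, ∀ x y : ℝ, H₁ t x ≠ H₂ t y) :
    ∀ t ∈ Set.Icc (0 : ℝ) 1,
      linkingIntegral (H₁ t) (H₂ t) = linkingIntegral (H₁ 0) (H₂ 0) := by
  intro t ht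
  have hper₁ : ∀ s ∈ Set.Icc (0:ℝ) 1, H₁ s 1 = H₁ s 0 := fun s hs => by
    simpa using (hK₁ s hs).periodic 0
  have hper₂ : ∀ s ∈ Set.Icc (0:ℝ) 1, H₂ s 1 = H₂ s 0 := fun s hs => by
    simpa using (hK₂ s hs).periodic 0
  have key := GaussLink.main_key (h₁ := fun p : ℝ × ℝ => H₁ p.1 p.2)
    (h₂ := fun p : ℝ × ℝ => H₂ p.1 p.2) hH₁ hH₂
    (fun s hs => hper₁ s hs) (fun s hs => hper₂ s hs)
    (fun t' ht' x y => hdisj t' ht' x y) ht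
  have conv : ∀ t₀ : ℝ, linkingIntegral (H₁ t₀) (H₂ t₀)
      = (1 / (4 * Real.pi)) * ∫ x in Set.Icc (![0,0] : Fin 2 → ℝ) ![1,1],
          GaussLink.Phi0 (fun p : ℝ × ℝ => H₁ p.1 p.2) (fun p : ℝ × ℝ => H₂ p.1 p.2)
            (Fin.insertNth 0 t₀ x) := by
    intro t₀
    unfold linkingIntegral
    rw [GaussLink.face0_convert]
    congr 1
    apply MeasureTheory.setIntegral_congr_fun (measurableSet_Icc.prod measurableSet_Icc)
    intro p _
    have hd1 : deriv (H₁ t₀) p.1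
        = GaussLink.psnd (fun p : ℝ × ℝ => H₁ p.1 p.2) (t₀, p.1) :=
      (GaussLink.hasDerivAt_snd hH₁ t₀ p.1).deriv
    have hd2 : deriv (H₂ t₀) p.2
        = GaussLink.psnd (fun p : ℝ × ℝ => H₂ p.1 p.2) (t₀, p.2) :=
      (GaussLink.hasDerivAt_snd hH₂ t₀ p.2).deriv
    show det3 (deriv (H₁ t₀) p.1) (deriv (H₂ t₀) p.2) (H₂ t₀ p.2 - H₁ t₀ p.1)
        / ‖H₂ t₀ p.2 - H₁ t₀ p.1‖ ^ 3 = _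
    rw [hd1, hd2]
  rw [conv t, conv 0, key]
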